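/- arXiv:math/0304346 — 2 statements merged into one kernel-verified Lean document; each statement's English description precedes it below -/
import Mathlib

section
/- Let C₁ = C(c₁,r₁) and C₂ = C(c₂,r₂) be circles in the Euclidean plane with r₁, r₂ > 0 and (c₁,r₁) ≠ (c₂,r₂). Then the set of lines that are tangent to both C₁ and C₂ is finite and has at most 4 elements. -/
open Metric Set Submodule
open scoped RealInnerProductSpace

noncomputable section

/-- The Euclidean plane. -/
abbrev E2 : Type := EuclideanSpace ℝ (Fin 2)

lemma orth_finrank (n : E2) (hn : n ≠ 0) : Module.finrank ℝ ((ℝ ∙ n)ᗮ) = 1 := by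
  have h1 := (ℝ ∙ n).finrank_add_finrank_orthogonal
  rw [finrank_span_singleton hn, finrank_euclideanSpace_fin] at h1
  omega

lemma orth_eq {S : Submodule ℝ E2} (hS : Module.finrank ℝ S = 1) {n : E2} (hn : n ≠ 0)
    (h : S ≤ (ℝ ∙ n)ᗮ) : S = (ℝ ∙ n)ᗮ :=
  Submodule.eq_of_le_of_finrank_eq h (by rw [hS, orth_finrank n hn])

lemma mem_line_iff {L : AffineSubspace ℝ E2} {p x : E2} (hp : p ∈ L) :
    x ∈ L ↔ x - p ∈ L.direction := by
  constructor
  · intro hx; simpa using AffineSubspace.vsub_mem_direction hx hp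
  · intro hx; simpa using AffineSubspace.vadd_mem_of_mem_direction hx hp

lemma infDist_line (L : AffineSubspace ℝ E2) (hL : Module.finrank ℝ L.direction = 1)
    {p : E2} (hp : p ∈ L) {n : E2} (hn : ‖n‖ = 1)
    (hperp : L.direction ≤ (ℝ ∙ n)ᗮ) (c : E2) :
    Metric.infDist c (L : Set E2) = |⟪n, c - p⟫| := by
  have hne : n ≠ 0 := by intro h; simp [h] at hn
  have hdir : L.direction = (ℝ ∙ n)ᗮ := orth_eq hL hne hperp
  set t : ℝ := ⟪n, c - p⟫ with ht
  have hnn : ⟪n, n⟫ = 1 := by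
    rw [real_inner_self_eq_norm_sq, hn]; norm_num
  have hf : c - t • n ∈ L := by
    rw [mem_line_iff hp, hdir, Submodule.mem_orthogonal_singleton_iff_inner_right]
    have h2 : c - t • n - p = (c - p) - t • n := by module
    rw [h2, inner_sub_right, real_inner_smul_right, hnn]
    simp [ht]
  have hd : dist c (c - t • n) = |t| := by
    rw [dist_eq_norm]
    have h3 : c - (c - t • n) = t • n := by module
    rw [h3, norm_smul, hn]
    simp
  refine le_antisymm ?_ ?_
  · calc Metric.infDist c (L : Set E2) ≤ dist c (c - t • n) := Metric.infDist_le_dist_of_mem hf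
      _ = |t| := hd
  · by_contra hcon
    push_neg at hcon
    rw [Metric.infDist_lt_iff ⟨p, hp⟩] at hcon
    obtain ⟨y, hy, hlt⟩ := hcon
    refine absurd hlt (not_lt.2 ?_)
    have hyd : y - p ∈ L.direction := (mem_line_iff hp).1 hy
    have h0 : ⟪n, y - p⟫ = 0 := by
      have := hdir ▸ hyd
      exact Submodule.mem_orthogonal_singleton_iff_inner_right.1 this
    have : ⟪n, c - y⟫ = t := by
      have : c - y = (c - p) - (y - p) := by abel
      rw [this, inner_sub_right, h0, ht, sub_zero]
    calc |t| = |⟪n, c - y⟫| := by rw [this]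
      _ ≤ ‖n‖ * ‖c - y‖ := abs_real_inner_le_norm n (c - y)
      _ = dist c y := by rw [hn, one_mul, dist_eq_norm]

lemma exists_unit_perp (W : Submodule ℝ E2) (hW : Module.finrank ℝ W = 1) :
    ∃ n : E2, ‖n‖ = 1 ∧ n ∈ Wᗮ := by
  have horth : Module.finrank ℝ (Wᗮ) = 1 := by
    have h1 := W.finrank_add_finrank_orthogonal
    rw [hW, finrank_euclideanSpace_fin] at h1
    omega
  have : Nontrivial (Wᗮ) := by
    apply Module.nontrivial_of_finrank_pos (R := ℝ)
    omega
  obtain ⟨m, hm⟩ := exists_ne (0 : Wᗮ)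
  have hm0 : (m : E2) ≠ 0 := fun h => hm (Subtype.ext h)
  refine ⟨‖(m : E2)‖⁻¹ • m, ?_, ?_⟩
  · rw [norm_smul, norm_inv, norm_norm, inv_mul_cancel₀ (norm_ne_zero_iff.2 hm0)]
  · exact Submodule.smul_mem _ _ m.2

lemma key (c₁ c₂ : E2) (r₁ r₂ : ℝ) (hr₁ : 0 < r₁) (hr₂ : 0 < r₂)
    (L : AffineSubspace ℝ E2) (hL : Module.finrank ℝ L.direction = 1)
    (h1 : Metric.infDist c₁ (L : Set E2) = r₁) (h2 : Metric.infDist c₂ (L : Set E2) = r₂) :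
    ∃ ν : E2, ‖ν‖ = 1 ∧
      (⟪ν, c₂ - c₁⟫ = r₂ - r₁ ∨ ⟪ν, c₂ - c₁⟫ = -(r₁ + r₂)) ∧
      L = AffineSubspace.mk' (c₁ - r₁ • ν) ((ℝ ∙ ν)ᗮ) := by
  -- L is nonempty
  obtain ⟨p, hp⟩ : (L : Set E2).Nonempty := by
    rcases (L : Set E2).eq_empty_or_nonempty with h | h
    · rw [h, Metric.infDist_empty] at h1; linarith
    · exact h
  -- unit normal n
  obtain ⟨n, hn, hnW⟩ := exists_unit_perp L.direction hL
  have hperp : L.direction ≤ (ℝ ∙ n)ᗮ := by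
    intro v hv
    rw [Submodule.mem_orthogonal_singleton_iff_inner_right]
    rw [real_inner_comm]
    exact hnW v hv
  set t : ℝ := ⟪n, c₁ - p⟫ with ht
  have habs : |t| = r₁ := by rw [← h1, infDist_line L hL hp hn hperp c₁]
  have ht0 : t ≠ 0 := by
    intro h; rw [h, abs_zero] at habs; linarith
  set ν : E2 := (t / r₁) • n with hν
  have hνnorm : ‖ν‖ = 1 := by
    rw [hν, norm_smul, hn, mul_one, Real.norm_eq_abs, abs_div, habs, abs_of_pos hr₁,
      div_self (ne_of_gt hr₁)]
  have hν0 : ν ≠ 0 := by intro h; rw [h, norm_zero] at hνnorm; linarith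
  have hperpν : L.direction ≤ (ℝ ∙ ν)ᗮ := by
    intro v hv
    rw [Submodule.mem_orthogonal_singleton_iff_inner_right, hν, real_inner_smul_left]
    have := Submodule.mem_orthogonal_singleton_iff_inner_right.1 (hperp hv)
    rw [this, mul_zero]
  have hνc₁ : ⟪ν, c₁ - p⟫ = r₁ := by
    rw [hν, real_inner_smul_left, ← ht]
    have : t * t = r₁ * r₁ := by
      have := habs; nlinarith [abs_nonneg t, sq_abs t]
    field_simp
    nlinarith
  have hdist2 : |⟪ν, c₂ - p⟫| = r₂ := by
    rw [← h2, infDist_line L hL hp hνnorm hperpν c₂]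
  have hsplit : ⟪ν, c₂ - p⟫ = ⟪ν, c₂ - c₁⟫ + r₁ := by
    have hcp : c₂ - p = (c₂ - c₁) + (c₁ - p) := by abel
    rw [hcp, inner_add_right, hνc₁]
  have hdisj : ⟪ν, c₂ - c₁⟫ = r₂ - r₁ ∨ ⟪ν, c₂ - c₁⟫ = -(r₁ + r₂) := by
    rw [hsplit] at hdist2
    rcases abs_eq hr₂.le |>.1 hdist2 with h | h
    · left; linarith
    · right; linarith
  refine ⟨ν, hνnorm, hdisj, ?_⟩
  have hdirν : L.direction = (ℝ ∙ ν)ᗮ := orth_eq hL hν0 hperpν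
  have hf : c₁ - r₁ • ν ∈ L := by
    rw [mem_line_iff hp, hdirν, Submodule.mem_orthogonal_singleton_iff_inner_right]
    have heq : c₁ - r₁ • ν - p = (c₁ - p) - r₁ • ν := by module
    rw [heq, inner_sub_right, hνc₁, real_inner_smul_right,
      real_inner_self_eq_norm_sq, hνnorm]
    norm_num
  refine AffineSubspace.ext_of_direction_eq ?_ ⟨c₁ - r₁ • ν, hf, AffineSubspace.self_mem_mk' _ _⟩
  rw [hdirν, AffineSubspace.direction_mk']

lemma decomp {u w : E2} (hu : ‖u‖ = 1) (hw : ‖w‖ = 1) (huw : ⟪u, w⟫ = 0) (x : E2) :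
    x = ⟪u, x⟫ • u + ⟪w, x⟫ • w := by
  have hu0 : u ≠ 0 := by intro h; rw [h, norm_zero] at hu; linarith
  have hw0 : w ≠ 0 := by intro h; rw [h, norm_zero] at hw; linarith
  have huu : ⟪u, u⟫ = 1 := by rw [real_inner_self_eq_norm_sq, hu]; norm_num
  have hww : ⟪w, w⟫ = 1 := by rw [real_inner_self_eq_norm_sq, hw]; norm_num
  have hwu : ⟪w, u⟫ = 0 := by rw [real_inner_comm]; exact huw
  set z : E2 := x - ⟪u, x⟫ • u - ⟪w, x⟫ • w with hz
  have hzu : ⟪u, z⟫ = 0 := by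
    rw [hz, inner_sub_right, inner_sub_right, real_inner_smul_right, real_inner_smul_right,
      huu, huw]
    ring
  have hzw : ⟪w, z⟫ = 0 := by
    rw [hz, inner_sub_right, inner_sub_right, real_inner_smul_right, real_inner_smul_right,
      hww, hwu]
    ring
  have hspan : (ℝ ∙ w) = (ℝ ∙ u)ᗮ := by
    apply orth_eq (finrank_span_singleton hw0) hu0
    rw [Submodule.span_singleton_le_iff_mem, Submodule.mem_orthogonal_singleton_iff_inner_right]
    exact huw
  have hzm : z ∈ (ℝ ∙ w) := by
    rw [hspan, Submodule.mem_orthogonal_singleton_iff_inner_right]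
    exact hzu
  obtain ⟨c, hc⟩ := Submodule.mem_span_singleton.1 hzm
  have : c = 0 := by
    have := hzw
    rw [← hc, real_inner_smul_right, hww, mul_one] at this
    exact this
  have hz0 : z = 0 := by rw [← hc, this, zero_smul]
  have := hz
  rw [hz0] at this
  have : x - ⟪u, x⟫ • u - ⟪w, x⟫ • w = 0 := this.symm
  linear_combination (norm := module) this

lemma two_sols {d : E2} (hd : d ≠ 0) {w : E2} (hw : ‖w‖ = 1)
    (huw : ⟪‖d‖⁻¹ • d, w⟫ = 0) (k : ℝ) (ν : E2) (hν : ‖ν‖ = 1) (hk : ⟪ν, d⟫ = k) :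
    ν = (k / ‖d‖) • (‖d‖⁻¹ • d) + Real.sqrt (1 - (k / ‖d‖) ^ 2) • w ∨
    ν = (k / ‖d‖) • (‖d‖⁻¹ • d) - Real.sqrt (1 - (k / ‖d‖) ^ 2) • w := by
  set u : E2 := ‖d‖⁻¹ • d with hu_def
  have hdn : ‖d‖ ≠ 0 := norm_ne_zero_iff.2 hd
  have hu : ‖u‖ = 1 := by
    rw [hu_def, norm_smul, norm_inv, norm_norm, inv_mul_cancel₀ hdn]
  have huu : ⟪u, u⟫ = 1 := by rw [real_inner_self_eq_norm_sq, hu]; norm_num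
  have hww : ⟪w, w⟫ = 1 := by rw [real_inner_self_eq_norm_sq, hw]; norm_num
  have hwu : ⟪w, u⟫ = 0 := by rw [real_inner_comm]; exact huw
  set a : ℝ := ⟪u, ν⟫ with ha_def
  set b : ℝ := ⟪w, ν⟫ with hb_def
  have ha : a = k / ‖d‖ := by
    rw [ha_def, hu_def, real_inner_smul_left, real_inner_comm, hk, div_eq_inv_mul]
  have hdec : ν = a • u + b • w := decomp hu hw huw ν
  have hab : a ^ 2 + b ^ 2 = 1 := by
    have h1 : ⟪ν, ν⟫ = 1 := by rw [real_inner_self_eq_norm_sq, hν]; norm_num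
    rw [hdec] at h1
    simp only [inner_add_left, inner_add_right, real_inner_smul_left, real_inner_smul_right,
      huu, hww, huw, hwu] at h1
    nlinarith [h1]
  have hb2 : b ^ 2 = 1 - a ^ 2 := by linarith
  have habs : |b| = Real.sqrt (1 - (k / ‖d‖) ^ 2) := by
    rw [← ha, ← hb2, Real.sqrt_sq_eq_abs]
  rcases abs_choice b with h | h
  · left
    rw [hdec, ha, ← habs, h]
  · right
    have hs : Real.sqrt (1 - (k / ‖d‖) ^ 2) = -b := by rw [← habs, h]
    rw [hdec, ha, hs]
    module

/-- A line in `ℝ²`: a 1-dimensional affine subspace. -/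
def IsLine (L : AffineSubspace ℝ E2) : Prop := Module.finrank ℝ L.direction = 1

/-- A line is tangent to the circle with centre `c` and radius `r` if the distance
from `c` to the line equals `r`. -/
def Tangent (c : E2) (r : ℝ) (L : AffineSubspace ℝ E2) : Prop :=
  Metric.infDist c (L : Set E2) = r

/-- Two distinct circles in the plane have at most four common tangent lines. -/
theorem common_tangents_two_circles_finite
    (c₁ c₂ : E2) (r₁ r₂ : ℝ) (hr₁ : 0 < r₁) (hr₂ : 0 < r₂)
    (hne : (c₁, r₁) ≠ (c₂, r₂)) :
    {L : AffineSubspace ℝ E2 | IsLine L ∧ Tangent c₁ r₁ L ∧ Tangent c₂ r₂ L}.Finite ∧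
    {L : AffineSubspace ℝ E2 | IsLine L ∧ Tangent c₁ r₁ L ∧ Tangent c₂ r₂ L}.ncard ≤ 4 := by
  classical
  set S := {L : AffineSubspace ℝ E2 | IsLine L ∧ Tangent c₁ r₁ L ∧ Tangent c₂ r₂ L} with hSdef
  have hkey : ∀ L ∈ S, ∃ ν : E2, ‖ν‖ = 1 ∧
      (⟪ν, c₂ - c₁⟫ = r₂ - r₁ ∨ ⟪ν, c₂ - c₁⟫ = -(r₁ + r₂)) ∧
      L = AffineSubspace.mk' (c₁ - r₁ • ν) ((ℝ ∙ ν)ᗮ) := by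
    rintro L ⟨hL, h1, h2⟩
    exact key c₁ c₂ r₁ r₂ hr₁ hr₂ L hL h1 h2
  set F : AffineSubspace ℝ E2 → E2 :=
    fun L => if h : L ∈ S then (hkey L h).choose else 0 with hFdef
  have hFspec : ∀ L, ∀ h : L ∈ S, ‖F L‖ = 1 ∧
      (⟪F L, c₂ - c₁⟫ = r₂ - r₁ ∨ ⟪F L, c₂ - c₁⟫ = -(r₁ + r₂)) ∧
      L = AffineSubspace.mk' (c₁ - r₁ • F L) ((ℝ ∙ F L)ᗮ) := by
    intro L h
    simp only [hFdef, dif_pos h]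
    exact (hkey L h).choose_spec
  have hinj : Set.InjOn F S := by
    intro L hL L' hL' heq
    rw [(hFspec L hL).2.2, (hFspec L' hL').2.2, heq]
  by_cases hc : c₁ = c₂
  · have hr : r₁ ≠ r₂ := fun h => hne (by rw [hc, h])
    have hSe : S = ∅ := by
      rw [Set.eq_empty_iff_forall_notMem]
      intro L hL
      obtain ⟨hnorm, hdisj, _⟩ := hFspec L hL
      rw [hc, sub_self, inner_zero_right] at hdisj
      rcases hdisj with h | h
      · exact hr (by linarith)
      · linarith
    rw [hSe]
    simp
  · have hd : c₂ - c₁ ≠ 0 := sub_ne_zero.2 (Ne.symm hc)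
    set d : E2 := c₂ - c₁ with hddef
    have hu0 : ‖d‖⁻¹ • d ≠ 0 :=
      smul_ne_zero (inv_ne_zero (norm_ne_zero_iff.2 hd)) hd
    obtain ⟨w, hw, hwperp⟩ := exists_unit_perp (ℝ ∙ (‖d‖⁻¹ • d)) (finrank_span_singleton hu0)
    have huw : ⟪‖d‖⁻¹ • d, w⟫ = 0 :=
      Submodule.mem_orthogonal_singleton_iff_inner_right.1 hwperp
    set k₁ : ℝ := r₂ - r₁ with hk₁
    set k₂ : ℝ := -(r₁ + r₂) with hk₂
    set v₁ : E2 := (k₁ / ‖d‖) • (‖d‖⁻¹ • d) + Real.sqrt (1 - (k₁ / ‖d‖) ^ 2) • w with hv₁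
    set v₂ : E2 := (k₁ / ‖d‖) • (‖d‖⁻¹ • d) - Real.sqrt (1 - (k₁ / ‖d‖) ^ 2) • w with hv₂
    set v₃ : E2 := (k₂ / ‖d‖) • (‖d‖⁻¹ • d) + Real.sqrt (1 - (k₂ / ‖d‖) ^ 2) • w with hv₃
    set v₄ : E2 := (k₂ / ‖d‖) • (‖d‖⁻¹ • d) - Real.sqrt (1 - (k₂ / ‖d‖) ^ 2) • w with hv₄
    have him : ∀ L ∈ S, F L ∈ ({v₁, v₂, v₃, v₄} : Set E2) := by
      intro L h
      obtain ⟨hnorm, hdisj, _⟩ := hFspec L h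
      rcases hdisj with h' | h'
      · rcases two_sols hd hw huw k₁ (F L) hnorm h' with h'' | h''
        · exact Set.mem_insert_iff.2 (Or.inl h'')
        · exact Set.mem_insert_iff.2 (Or.inr (Set.mem_insert_iff.2 (Or.inl h'')))
      · rcases two_sols hd hw huw k₂ (F L) hnorm h' with h'' | h''
        · exact Set.mem_insert_iff.2 (Or.inr (Set.mem_insert_iff.2 (Or.inr
            (Set.mem_insert_iff.2 (Or.inl h'')))))
        · exact Set.mem_insert_iff.2 (Or.inr (Set.mem_insert_iff.2 (Or.inr
            (Set.mem_insert_iff.2 (Or.inr h'')))))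
    have hV4 : ({v₁, v₂, v₃, v₄} : Set E2).Finite := Set.toFinite _
    have himg : F '' S ⊆ ({v₁, v₂, v₃, v₄} : Set E2) := by
      rintro _ ⟨L, hL, rfl⟩
      exact him L hL
    have hfin : S.Finite := Set.Finite.of_finite_image (hV4.subset himg) hinj
    refine ⟨hfin, ?_⟩
    have hcard4 : ({v₁, v₂, v₃, v₄} : Set E2).ncard ≤ 4 := by
      calc ({v₁, v₂, v₃, v₄} : Set E2).ncard
          ≤ ({v₂, v₃, v₄} : Set E2).ncard + 1 := Set.ncard_insert_le _ _
        _ ≤ (({v₃, v₄} : Set E2).ncard + 1) + 1 :=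
            Nat.add_le_add_right (Set.ncard_insert_le _ _) 1
        _ ≤ ((({v₄} : Set E2).ncard + 1) + 1) + 1 :=
            Nat.add_le_add_right (Nat.add_le_add_right (Set.ncard_insert_le _ _) 1) 1
        _ = 4 := by rw [Set.ncard_singleton]
    calc S.ncard = (F '' S).ncard := (Set.ncard_image_of_injOn hinj).symm
      _ ≤ ({v₁, v₂, v₃, v₄} : Set E2).ncard := Set.ncard_le_ncard himg hV4
      _ ≤ 4 := hcard4
end
end

section
/- Let C₁ = C(c₁,r₁), C₂ = C(c₂,r₂) and D₁ = C(d₁,ρ₁), D₂ = C(d₂,ρ₂) be circles in the Euclidean plane with all radii positive, (c₁,r₁) ≠ (c₂,r₂) and (d₁,ρ₁) ≠ (d₂,ρ₂). Suppose the set T of lines tangent to both C₁ and C₂ has exactly 4 elements and coincides with the set of lines tangent to both D₁ and D₂. Then the unordered pair {(c₁,r₁),(c₂,r₂)} equals the unordered pair {(d₁,ρ₁),(d₂,ρ₂)}; that is, four distinct common tangents determine the two circles. -/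
noncomputable section

/-! Orient each common tangent of the circles `(a, r)` and `(b, s)` by its unit normal `u`
pointing towards `a`; then `⟪u, a - b⟫ ∈ {r - s, r + s}`. In the plane, two distinct unit vectors
with the same inner product against `a - b` are mirror images in the line `ℝ (a - b)`, so at most
two normals share a value, and four distinct tangents split into two such mirror pairs. Hence the
four normals sum to `(4 r / ‖a - b‖²) • (a - b)`. If a third circle `(x, ρ)` with `x ≠ a` touches
all four lines, the same sum equals `(4 r / ‖a - x‖²) • (a - x)`, and as `v ↦ v / ‖v‖²` is
injective, `x = b`. -/

open Module
open scoped RealInnerProductSpace EuclideanSpace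

section InnerProductSpace

variable {V : Type*} [NormedAddCommGroup V] [InnerProductSpace ℝ V]

theorem norm_div_norm_sq_smul (k : ℝ) (v : V) : ‖(k / ‖v‖ ^ 2) • v‖ = |k| / ‖v‖ := by
  rcases eq_or_ne v 0 with rfl | hv
  · simp
  · have := norm_pos_iff.2 hv
    rw [norm_smul, norm_div, norm_pow, norm_norm, Real.norm_eq_abs]
    field_simp

theorem eq_of_div_norm_sq_smul_eq {k : ℝ} (hk : k ≠ 0) {v w : V}
    (h : (k / ‖v‖ ^ 2) • v = (k / ‖w‖ ^ 2) • w) : v = w := by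
  have hnorm : ‖v‖ = ‖w‖ := by
    have := congrArg norm h
    rwa [norm_div_norm_sq_smul, norm_div_norm_sq_smul, div_eq_mul_inv, div_eq_mul_inv,
      mul_right_inj' (abs_ne_zero.2 hk), inv_inj] at this
  rcases eq_or_ne w 0 with rfl | hw
  · exact norm_eq_zero.1 (hnorm.trans norm_zero)
  · rw [hnorm] at h
    exact smul_right_injective V (div_ne_zero hk (by positivity)) h

theorem infDist_setOf_inner_eq {u : V} (hu : ‖u‖ = 1) (t : ℝ) (c : V) :
    Metric.infDist c {z | ⟪u, z⟫ = t} = |⟪u, c⟫ - t| := by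
  have hmem : c - (⟪u, c⟫ - t) • u ∈ {z | ⟪u, z⟫ = t} := by
    change ⟪u, _⟫ = t
    rw [inner_sub_right, real_inner_smul_right, real_inner_self_eq_norm_sq, hu]
    ring
  refine le_antisymm ?_ ((Metric.le_infDist ⟨_, hmem⟩).2 fun z (hz : ⟪u, z⟫ = t) => ?_)
  · refine (Metric.infDist_le_dist_of_mem hmem).trans_eq ?_
    rw [dist_eq_norm, sub_sub_cancel, norm_smul, hu, mul_one, Real.norm_eq_abs]
  · calc |⟪u, c⟫ - t| = |⟪u, c - z⟫| := by rw [inner_sub_right, hz]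
      _ ≤ ‖u‖ * ‖c - z‖ := abs_real_inner_le_norm u (c - z)
      _ = dist c z := by rw [hu, one_mul, dist_eq_norm]

theorem inner_sub_eq_of_infDist_eq {L : AffineSubspace ℝ V} {u a b : V} {r s : ℝ}
    (hu : ‖u‖ = 1) (hL : (L : Set V) = {z | ⟪u, z⟫ = ⟪u, a⟫ - r}) (h : Metric.infDist b L = s) :
    ⟪u, a - b⟫ = r - s ∨ ⟪u, a - b⟫ = r + s := by
  rw [hL, infDist_setOf_inner_eq hu] at h
  rcases abs_eq (h ▸ abs_nonneg _) |>.1 h with h | h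
  · left; rw [inner_sub_right]; linarith
  · right; rw [inner_sub_right]; linarith

variable [Fact (finrank ℝ V = 2)]

theorem add_eq_smul_of_inner_eq {u u' w : V} (hw : w ≠ 0) (hne : u ≠ u') (hnorm : ‖u‖ = ‖u'‖)
    (h : ⟪u, w⟫ = ⟪u', w⟫) : u + u' = (2 * ⟪u, w⟫ / ‖w‖ ^ 2) • w := by
  have hsum : ⟪u - u', u + u'⟫ = 0 := by
    rw [real_inner_comm, real_inner_add_sub_eq_zero_iff, hnorm]
  have hw' : ⟪u - u', w⟫ = 0 := by rw [inner_sub_left, h, sub_self]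
  obtain ⟨c, hc⟩ := Submodule.mem_span_singleton.1 <|
    Submodule.mem_span_singleton_of_inner_eq_zero_of_inner_eq_zero (sub_ne_zero.2 hne) hw hsum hw'
  have hc' : c * ‖w‖ ^ 2 = 2 * ⟪u, w⟫ := by
    rw [← real_inner_self_eq_norm_sq, ← real_inner_smul_left, hc, inner_add_left, h]; ring
  rw [← hc, ← hc', mul_div_assoc, div_self (by positivity), mul_one]

variable {s : Finset V} {w : V} {R p : ℝ}

theorem card_le_two_of_inner_eq (hw : w ≠ 0) (hs : ∀ u ∈ s, ‖u‖ = R ∧ ⟪u, w⟫ = p) :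
    s.card ≤ 2 := by
  by_contra! h
  obtain ⟨u₁, h₁, u₂, h₂, u₃, h₃, h₁₂, h₁₃, h₂₃⟩ := Finset.two_lt_card.1 h
  have e₂ := add_eq_smul_of_inner_eq hw h₁₂ ((hs _ h₁).1.trans (hs _ h₂).1.symm)
    ((hs _ h₁).2.trans (hs _ h₂).2.symm)
  have e₃ := add_eq_smul_of_inner_eq hw h₁₃ ((hs _ h₁).1.trans (hs _ h₃).1.symm)
    ((hs _ h₁).2.trans (hs _ h₃).2.symm)
  exact h₂₃ (add_left_cancel (e₂.trans e₃.symm))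

theorem sum_eq_smul_of_card_eq_two (hw : w ≠ 0) (hs : ∀ u ∈ s, ‖u‖ = R ∧ ⟪u, w⟫ = p)
    (hcard : s.card = 2) : ∑ u ∈ s, u = (2 * p / ‖w‖ ^ 2) • w := by
  classical
  obtain ⟨u, u', hne, rfl⟩ := Finset.card_eq_two.1 hcard
  have hu := hs u (by simp)
  have hu' := hs u' (by simp)
  rw [Finset.sum_pair hne, add_eq_smul_of_inner_eq hw hne (hu.1.trans hu'.1.symm)
    (hu.2.trans hu'.2.symm), hu.2]

theorem sum_eq_smul_of_card_eq_four {q : ℝ} (hw : w ≠ 0)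
    (hs : ∀ u ∈ s, ‖u‖ = R ∧ (⟪u, w⟫ = p ∨ ⟪u, w⟫ = q)) (hcard : s.card = 4) :
    ∑ u ∈ s, u = (2 * (p + q) / ‖w‖ ^ 2) • w := by
  classical
  set P := s.filter (⟪·, w⟫ = p)
  set Q := s.filter (¬⟪·, w⟫ = p)
  have hP : ∀ u ∈ P, ‖u‖ = R ∧ ⟪u, w⟫ = p := by
    intro u hu
    rw [Finset.mem_filter] at hu
    exact ⟨(hs u hu.1).1, hu.2⟩
  have hQ : ∀ u ∈ Q, ‖u‖ = R ∧ ⟪u, w⟫ = q := by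
    intro u hu
    rw [Finset.mem_filter] at hu
    exact ⟨(hs u hu.1).1, (hs u hu.1).2.resolve_left hu.2⟩
  have hPQ : P.card + Q.card = 4 := (Finset.card_filter_add_card_filter_not _).trans hcard
  have hP2 := card_le_two_of_inner_eq hw hP
  have hQ2 := card_le_two_of_inner_eq hw hQ
  rw [← Finset.sum_filter_add_sum_filter_not s (⟪·, w⟫ = p),
    sum_eq_smul_of_card_eq_two hw hP (by omega), sum_eq_smul_of_card_eq_two hw hQ (by omega),
    ← add_smul, ← add_div, mul_add]

theorem exists_unit_eq_setOf_inner_eq {L : AffineSubspace ℝ V} (hL : finrank ℝ L.direction = 1) :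
    ∃ u : V, ‖u‖ = 1 ∧ ∃ t : ℝ, (L : Set V) = {z | ⟪u, z⟫ = t} := by
  have : FiniteDimensional ℝ V := .of_fact_finrank_eq_succ 1
  obtain ⟨p, hp⟩ : (L : Set V).Nonempty := by
    refine (AffineSubspace.nonempty_iff_ne_bot L).2 fun hbot => ?_
    rw [hbot, AffineSubspace.direction_bot, finrank_bot] at hL
    exact zero_ne_one hL
  have hperp : finrank ℝ L.directionᗮ = 1 := by
    have := L.direction.finrank_add_finrank_orthogonal
    rw [hL, Fact.out (p := finrank ℝ V = 2)] at this
    omega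
  have : Nontrivial L.directionᗮ := Module.nontrivial_of_finrank_eq_succ hperp
  obtain ⟨⟨u, hu_mem⟩, hu⟩ := exists_norm_eq L.directionᗮ zero_le_one
  replace hu : ‖u‖ = 1 := hu
  have hu0 : u ≠ 0 := norm_ne_zero_iff.1 (by rw [hu]; exact one_ne_zero)
  have hdir : L.direction = (ℝ ∙ u)ᗮ := by
    refine Submodule.eq_of_le_of_finrank_eq (fun d hd => ?_) ?_
    · rw [Submodule.mem_orthogonal_singleton_iff_inner_right]
      exact L.direction.inner_left_of_mem_orthogonal hd hu_mem
    · rw [hL, Submodule.finrank_orthogonal_span_singleton (n := 1) hu0]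
  refine ⟨u, hu, ⟪u, p⟫, Set.ext fun z => ?_⟩
  rw [SetLike.mem_coe, ← AffineSubspace.vsub_right_mem_direction_iff_mem hp, hdir,
    Submodule.mem_orthogonal_singleton_iff_inner_right, vsub_eq_sub, inner_sub_right, sub_eq_zero]
  rfl

theorem exists_unit_eq_setOf_inner_eq_of_infDist_eq {L : AffineSubspace ℝ V}
    (hL : finrank ℝ L.direction = 1) {a : V} {r : ℝ} (hr : 0 ≤ r)
    (h : Metric.infDist a L = r) :
    ∃ u : V, ‖u‖ = 1 ∧ (L : Set V) = {z | ⟪u, z⟫ = ⟪u, a⟫ - r} := by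
  obtain ⟨u, hu, t, hL⟩ := exists_unit_eq_setOf_inner_eq hL
  rw [hL, infDist_setOf_inner_eq hu] at h
  rcases (abs_eq hr).1 h with h | h
  · exact ⟨u, hu, by rw [hL, ← h, sub_sub_cancel]⟩
  · refine ⟨-u, by rw [norm_neg, hu], ?_⟩
    rw [hL]
    ext z
    simp only [Set.mem_ofPred_eq, inner_neg_left]
    constructor <;> intro <;> linarith

end InnerProductSpace

def commonTangents (a : E2) (r : ℝ) (b : E2) (s : ℝ) : Set (AffineSubspace ℝ E2) :=
  {L | IsLine L ∧ Tangent a r L ∧ Tangent b s L}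

theorem eq_or_eq_of_forall_commonTangents_tangent {a b x : E2} {r s ρ : ℝ} (hr : 0 < r)
    (hab : (a, r) ≠ (b, s)) (hfin : (commonTangents a r b s).Finite)
    (hcard : (commonTangents a r b s).ncard = 4)
    (hx : ∀ L ∈ commonTangents a r b s, Tangent x ρ L) :
    (x, ρ) = (a, r) ∨ (x, ρ) = (b, s) := by
  classical
  set T := commonTangents a r b s
  obtain ⟨L₀, hL₀⟩ : T.Nonempty := Set.nonempty_of_ncard_ne_zero (by omega)
  by_cases hxa : x = a
  · exact .inl (Prod.ext hxa ((hx L₀ hL₀).symm.trans (hxa ▸ hL₀.2.1)))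
  have hba : b ≠ a := fun h => hab (Prod.ext h.symm (hL₀.2.1.symm.trans (h ▸ hL₀.2.2)))
  choose! n hn using fun L (hL : L ∈ T) =>
    exists_unit_eq_setOf_inner_eq_of_infDist_eq hL.1 hr.le hL.2.1
  have hinj : Set.InjOn n T := fun L hL L' hL' h =>
    SetLike.coe_injective ((hn L hL).2.trans (h ▸ (hn L' hL').2.symm))
  set U := hfin.toFinset.image n
  have hU : U.card = 4 := by
    rw [Finset.card_image_of_injOn (by simpa using hinj), ← Set.ncard_eq_toFinset_card _ hfin,
      hcard]
  have hsum : ∀ y σ, y ≠ a → (∀ L ∈ T, Tangent y σ L) →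
      ∑ u ∈ U, u = (4 * r / ‖a - y‖ ^ 2) • (a - y) := by
    intro y σ hy hyT
    have hs : ∀ u ∈ U, ‖u‖ = 1 ∧ (⟪u, a - y⟫ = r - σ ∨ ⟪u, a - y⟫ = r + σ) := by
      refine Finset.forall_mem_image.2 fun L hL => ?_
      rw [Set.Finite.mem_toFinset] at hL
      exact ⟨(hn L hL).1, inner_sub_eq_of_infDist_eq (hn L hL).1 (hn L hL).2 (hyT L hL)⟩
    rw [sum_eq_smul_of_card_eq_four (sub_ne_zero.2 hy.symm) hs hU]
    congr 1
    ring
  have hxb : x = b := by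
    have hab_ax := eq_of_div_norm_sq_smul_eq (by positivity)
      ((hsum b s hba fun L hL => hL.2.2).symm.trans (hsum x ρ hxa hx))
    exact (sub_right_injective hab_ax).symm
  exact .inr (Prod.ext hxb ((hx L₀ hL₀).symm.trans (hxb ▸ hL₀.2.2)))

theorem four_common_tangents_determine_circles_general
    (c₁ c₂ d₁ d₂ : E2) (r₁ r₂ ρ₁ ρ₂ : ℝ)
    (hr₁ : 0 < r₁)
    (hc : (c₁, r₁) ≠ (c₂, r₂)) (hd : (d₁, ρ₁) ≠ (d₂, ρ₂))
    (hfin : {L : AffineSubspace ℝ E2 | IsLine L ∧ Tangent c₁ r₁ L ∧ Tangent c₂ r₂ L}.Finite)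
    (hcard : {L : AffineSubspace ℝ E2 | IsLine L ∧ Tangent c₁ r₁ L ∧ Tangent c₂ r₂ L}.ncard = 4)
    (heq : {L : AffineSubspace ℝ E2 | IsLine L ∧ Tangent c₁ r₁ L ∧ Tangent c₂ r₂ L} =
      {L : AffineSubspace ℝ E2 | IsLine L ∧ Tangent d₁ ρ₁ L ∧ Tangent d₂ ρ₂ L}) :
    ({(c₁, r₁), (c₂, r₂)} : Set (E2 × ℝ)) = ({(d₁, ρ₁), (d₂, ρ₂)} : Set (E2 × ℝ)) := by
  have h₁ := eq_or_eq_of_forall_commonTangents_tangent hr₁ hc hfin hcard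
    fun L hL => ((Set.ext_iff.1 heq L).1 hL).2.1
  have h₂ := eq_or_eq_of_forall_commonTangents_tangent hr₁ hc hfin hcard
    fun L hL => ((Set.ext_iff.1 heq L).1 hL).2.2
  rcases h₁ with h₁ | h₁ <;> rcases h₂ with h₂ | h₂
  · exact absurd (h₁.trans h₂.symm) hd
  · rw [h₁, h₂]
  · rw [h₁, h₂, Set.pair_comm]
  · exact absurd (h₁.trans h₂.symm) hd

/-- Four distinct common tangent lines determine the two circles: if two pairs of
distinct circles have the same set of common tangents, and this set has exactly four
elements, then the pairs of circles coincide. -/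
theorem four_common_tangents_determine_circles
    (c₁ c₂ d₁ d₂ : E2) (r₁ r₂ ρ₁ ρ₂ : ℝ)
    (hr₁ : 0 < r₁) (hr₂ : 0 < r₂) (hρ₁ : 0 < ρ₁) (hρ₂ : 0 < ρ₂)
    (hc : (c₁, r₁) ≠ (c₂, r₂)) (hd : (d₁, ρ₁) ≠ (d₂, ρ₂))
    (hfin : {L : AffineSubspace ℝ E2 | IsLine L ∧ Tangent c₁ r₁ L ∧ Tangent c₂ r₂ L}.Finite)
    (hcard : {L : AffineSubspace ℝ E2 | IsLine L ∧ Tangent c₁ r₁ L ∧ Tangent c₂ r₂ L}.ncard = 4)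
    (heq : {L : AffineSubspace ℝ E2 | IsLine L ∧ Tangent c₁ r₁ L ∧ Tangent c₂ r₂ L} =
      {L : AffineSubspace ℝ E2 | IsLine L ∧ Tangent d₁ ρ₁ L ∧ Tangent d₂ ρ₂ L}) :
    ({(c₁, r₁), (c₂, r₂)} : Set (E2 × ℝ)) = ({(d₁, ρ₁), (d₂, ρ₂)} : Set (E2 × ℝ)) :=
  four_common_tangents_determine_circles_general c₁ c₂ d₁ d₂ r₁ r₂ ρ₁ ρ₂ hr₁ hc hd hfin hcard heq
end
end
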